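/- arXiv:2410.12553 — 3 statements merged into one kernel-verified Lean document; each statement's English description precedes it below -/
import Mathlib

section
/- The function u(x) = 2·ln(cosh θ / cosh(θ(1−2x))) satisfies the 1D Bratu equation u''(x) + λ e^{u(x)} = 0 on (0,1) with u(0) = u(1) = 0, provided θ > 0 satisfies cosh θ = 4θ/√(2λ) with λ > 0. -/
/-!
Writing `u = c - 2 log cosh (a x + b)` with `a = -2θ`, `b = θ`, `c = 2 log cosh θ`, one gets
`u'' = -2a² / cosh² (a x + b)` and `e^u = e^c / cosh² (a x + b)`, so `u'' + (2a² / e^c) e^u = 0`.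
The condition `cosh θ = 4θ / √(2λ)` says exactly that `λ = 8θ² / cosh² θ = 2a² / e^c`.
The boundary values vanish because `cosh` is even.
-/

open Real

namespace Real

theorem hasDerivAt_log_cosh (x : ℝ) : HasDerivAt (fun y => log (cosh y)) (tanh x) x := by
  rw [tanh_eq_sinh_div_cosh]
  exact (hasDerivAt_cosh x).log (cosh_pos x).ne'

theorem hasDerivAt_tanh (x : ℝ) : HasDerivAt tanh (1 / cosh x ^ 2) x := by
  rw [show tanh = fun y => sinh y / cosh y from funext tanh_eq_sinh_div_cosh]
  exact ((hasDerivAt_sinh x).div (hasDerivAt_cosh x) (cosh_pos x).ne').congr_deriv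
    (by linear_combination cosh_sq_sub_sinh_sq x / cosh x ^ 2)

theorem exp_two_mul_log {x : ℝ} (hx : 0 < x) : exp (2 * log x) = x ^ 2 := by
  rw [mul_comm, ← rpow_def_of_pos hx, rpow_two]

end Real

noncomputable def logCoshProfile (a b c x : ℝ) : ℝ := c - 2 * log (cosh (a * x + b))

section logCoshProfile

variable (a b c : ℝ)

theorem hasDerivAt_logCoshProfile (x : ℝ) :
    HasDerivAt (logCoshProfile a b c) (-2 * a * tanh (a * x + b)) x := by
  have hlin := ((hasDerivAt_id' x).const_mul a).add_const b
  exact (((Real.hasDerivAt_log_cosh _).comp x hlin).const_mul 2).const_sub c |>.congr_deriv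
    (by ring)

theorem deriv_logCoshProfile :
    deriv (logCoshProfile a b c) = fun x => -2 * a * tanh (a * x + b) :=
  funext fun x => (hasDerivAt_logCoshProfile a b c x).deriv

theorem deriv_deriv_logCoshProfile (x : ℝ) :
    deriv (deriv (logCoshProfile a b c)) x = -2 * a ^ 2 / cosh (a * x + b) ^ 2 := by
  have hlin := ((hasDerivAt_id' x).const_mul a).add_const b
  rw [deriv_logCoshProfile]
  exact (((Real.hasDerivAt_tanh _).comp x hlin).const_mul (-2 * a)).deriv.trans (by ring)

theorem exp_logCoshProfile (x : ℝ) :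
    exp (logCoshProfile a b c x) = exp c / cosh (a * x + b) ^ 2 := by
  rw [logCoshProfile, exp_sub, exp_two_mul_log (cosh_pos _)]

theorem deriv_deriv_logCoshProfile_add_exp (x : ℝ) :
    deriv (deriv (logCoshProfile a b c)) x
      + 2 * a ^ 2 / exp c * exp (logCoshProfile a b c x) = 0 := by
  rw [deriv_deriv_logCoshProfile, exp_logCoshProfile]
  field_simp
  ring

end logCoshProfile

open Real in
theorem bratu_1d_explicit_solution_general (lam θ : ℝ) (hlam : 0 < lam)
    (hcosh : Real.cosh θ = 4 * θ / Real.sqrt (2 * lam))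
    (u : ℝ → ℝ)
    (hu : ∀ x, u x = 2 * Real.log (Real.cosh θ / Real.cosh (θ * (1 - 2 * x)))) :
    (∀ x ∈ Set.Ioo (0:ℝ) 1, deriv (deriv u) x + lam * Real.exp (u x) = 0) ∧
    u 0 = 0 ∧ u 1 = 0 := by
  have hu_eq : u = logCoshProfile (-2 * θ) θ (2 * log (cosh θ)) := by
    funext x
    rw [hu, log_div (cosh_pos _).ne' (cosh_pos _).ne', logCoshProfile]
    ring_nf
  have hsq : lam * cosh θ ^ 2 = 8 * θ ^ 2 := by
    have hs : sqrt (2 * lam) ^ 2 = 2 * lam := sq_sqrt (by positivity)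
    rw [eq_div_iff (by positivity)] at hcosh
    linear_combination (cosh θ * sqrt (2 * lam) + 4 * θ) / 2 * hcosh - cosh θ ^ 2 / 2 * hs
  have hlam_eq : lam = 2 * (-2 * θ) ^ 2 / exp (2 * log (cosh θ)) := by
    rw [exp_two_mul_log (cosh_pos θ), eq_div_iff (by positivity)]
    linear_combination hsq
  refine ⟨fun x _ => ?_, ?_, ?_⟩
  · rw [hu_eq, hlam_eq]
    exact deriv_deriv_logCoshProfile_add_exp _ _ _ x
  · simp [hu, (cosh_pos θ).ne']
  · norm_num [hu, (cosh_pos θ).ne']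

open Real in
theorem bratu_1d_explicit_solution (lam θ : ℝ) (hlam : 0 < lam) (hθ : 0 < θ)
    (hcosh : Real.cosh θ = 4 * θ / Real.sqrt (2 * lam))
    (u : ℝ → ℝ)
    (hu : ∀ x, u x = 2 * Real.log (Real.cosh θ / Real.cosh (θ * (1 - 2 * x)))) :
    (∀ x ∈ Set.Ioo (0:ℝ) 1, deriv (deriv u) x + lam * Real.exp (u x) = 0) ∧
    u 0 = 0 ∧ u 1 = 0 :=
  bratu_1d_explicit_solution_general lam θ hlam hcosh u hu
end

section
/- For each λ > 0, the number of solutions θ > 0 of cosh θ = cθ with c = 4/√(2λ) is zero, one, or two; there are exactly two solutions when c > c*, exactly one when c = c*, and zero when c < c*, where c* is the unique value for which the line cθ is tangent to cosh θ (i.e., c* = sinh θ* with θ* tanh θ* = 1). -/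
open Real Set

private lemma hasDerivAt_G (k x : ℝ) :
    HasDerivAt (fun θ : ℝ => Real.cosh θ - k * θ) (Real.sinh x - k) x := by
  have h := (Real.hasDerivAt_cosh x).sub ((hasDerivAt_id x).const_mul k)
  simp at h
  exact h

private lemma G_cont (k : ℝ) : Continuous (fun θ : ℝ => Real.cosh θ - k * θ) :=
  Real.continuous_cosh.sub (continuous_const.mul continuous_id)

private lemma G_anti (k : ℝ) :
    StrictAntiOn (fun θ : ℝ => Real.cosh θ - k * θ) (Iic (Real.arsinh k)) := by
  apply strictAntiOn_of_deriv_neg (convex_Iic _) (G_cont k).continuousOn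
  intro x hx
  rw [interior_Iic] at hx
  rw [(hasDerivAt_G k x).deriv]
  have h : Real.sinh x < Real.sinh (Real.arsinh k) := Real.sinh_lt_sinh.mpr hx
  rw [Real.sinh_arsinh] at h
  linarith

private lemma G_mono (k : ℝ) :
    StrictMonoOn (fun θ : ℝ => Real.cosh θ - k * θ) (Ici (Real.arsinh k)) := by
  apply strictMonoOn_of_deriv_pos (convex_Ici _) (G_cont k).continuousOn
  intro x hx
  rw [interior_Ici] at hx
  rw [(hasDerivAt_G k x).deriv]
  have h : Real.sinh (Real.arsinh k) < Real.sinh x := Real.sinh_lt_sinh.mpr hx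
  rw [Real.sinh_arsinh] at h
  linarith

private lemma G_big (k b : ℝ) (hk : 0 ≤ k) (hb : 4 * k + 4 ≤ b) :
    0 < Real.cosh b - k * b := by
  have hb0 : (0:ℝ) < b := by linarith
  have h1 : 1 + b + b ^ 2 / 2 ≤ Real.exp b := Real.quadratic_le_exp_of_nonneg hb0.le
  have h2 : Real.exp b / 2 ≤ Real.cosh b := by
    rw [Real.cosh_eq]
    have := (Real.exp_pos (-b)).le
    linarith
  have h3 : k * b < b ^ 2 / 4 := by nlinarith
  nlinarith

theorem cosh_eq_linear_solution_count (lam : ℝ) (hlam : 0 < lam)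
    (θs : ℝ) (hθs : 0 < θs) (htan : θs * Real.tanh θs = 1)
    (c cstar : ℝ) (hc : c = 4 / Real.sqrt (2 * lam)) (hcs : cstar = Real.sinh θs) :
    (cstar < c → ∃ θ₁ θ₂ : ℝ, 0 < θ₁ ∧ 0 < θ₂ ∧ θ₁ ≠ θ₂ ∧
        Real.cosh θ₁ = c * θ₁ ∧ Real.cosh θ₂ = c * θ₂ ∧
        ∀ θ : ℝ, 0 < θ → Real.cosh θ = c * θ → θ = θ₁ ∨ θ = θ₂) ∧
    (c = cstar → ∃! θ : ℝ, 0 < θ ∧ Real.cosh θ = c * θ) ∧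
    (c < cstar → ¬ ∃ θ : ℝ, 0 < θ ∧ Real.cosh θ = c * θ) := by
  have hch := Real.cosh_pos θs
  have hθkey : θs * Real.sinh θs = Real.cosh θs := by
    rw [Real.tanh_eq_sinh_div_cosh] at htan
    field_simp at htan
    linarith
  have hcstar_pos : 0 < cstar := hcs ▸ Real.sinh_pos_iff.mpr hθs
  have harc : Real.arsinh cstar = θs := by rw [hcs, Real.arsinh_sinh]
  -- the key nonnegativity: cosh θ - cstar * θ > 0 for θ ≠ θs, = 0 at θs
  have hFθs : Real.cosh θs - cstar * θs = 0 := by rw [hcs]; linarith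
  have hFpos : ∀ θ : ℝ, θ ≠ θs → 0 < Real.cosh θ - cstar * θ := by
    intro θ hne
    rcases lt_or_gt_of_ne hne with h | h
    · have := G_anti cstar (a := θ) (b := θs)
        (Set.mem_Iic.mpr (by rw [harc]; exact le_of_lt h))
        (Set.mem_Iic.mpr harc.ge) h
      simpa [hFθs] using this
    · have := G_mono cstar (a := θs) (b := θ)
        (Set.mem_Ici.mpr harc.le)
        (Set.mem_Ici.mpr (by rw [harc]; exact le_of_lt h)) h
      simpa [hFθs] using this
  refine ⟨?_, ?_, ?_⟩
  · -- two solutions when cstar < c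
    intro hlt
    have hcpos : 0 < c := lt_trans hcstar_pos hlt
    set θc := Real.arsinh c with hθc
    have hsθc : Real.sinh θc = c := Real.sinh_arsinh c
    have hθsθc : θs < θc := by
      rw [← Real.sinh_lt_sinh, hsθc, ← hcs]; exact hlt
    set G := fun θ : ℝ => Real.cosh θ - c * θ with hG
    have hGθs : G θs < 0 := by
      simp only [hG]
      have : Real.cosh θs = θs * Real.sinh θs := hθkey.symm
      rw [this, ← hcs]
      nlinarith
    have hGθc : G θc < 0 := by
      have := G_anti c (a := θs) (b := θc) (Set.mem_Iic.mpr (le_of_lt hθsθc)) (Set.mem_Iic.mpr le_rfl) hθsθc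
      exact lt_trans this hGθs
    -- left root
    set a := min (θs / 2) (1 / (2 * c)) with ha
    have hapos : 0 < a := lt_min (by linarith) (by positivity)
    have haθc : a < θc := lt_of_le_of_lt (min_le_left _ _) (by linarith)
    have hGa : 0 < G a := by
      have h1 : 1 ≤ Real.cosh a := Real.one_le_cosh a
      have h2 : c * a ≤ c * (1 / (2 * c)) :=
        mul_le_mul_of_nonneg_left (min_le_right _ _) hcpos.le
      have h3 : c * (1 / (2 * c)) = 1 / 2 := by field_simp
      simp only [hG]; linarith [h2.trans_eq h3]
    obtain ⟨θ₁, hθ₁mem, hθ₁⟩ :=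
      intermediate_value_Icc' (le_of_lt haθc) (G_cont c).continuousOn
        (mem_Icc.mpr ⟨hGθc.le, hGa.le⟩)
    have hθ₁pos : 0 < θ₁ := lt_of_lt_of_le hapos hθ₁mem.1
    have hθ₁ne : θ₁ ≠ θc := fun h => by rw [h] at hθ₁; linarith [hGθc, hθ₁]
    have hθ₁lt : θ₁ < θc := lt_of_le_of_ne hθ₁mem.2 hθ₁ne
    -- right root
    set b := max θc (4 * c + 4) with hb
    have hGb : 0 < G b := G_big c b hcpos.le (le_max_right _ _)
    obtain ⟨θ₂, hθ₂mem, hθ₂⟩ :=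
      intermediate_value_Icc (le_max_left θc (4 * c + 4)) (G_cont c).continuousOn
        (mem_Icc.mpr ⟨hGθc.le, hGb.le⟩)
    have hθ₂ne : θ₂ ≠ θc := fun h => by rw [h] at hθ₂; linarith [hGθc, hθ₂]
    have hθ₂gt : θc < θ₂ := lt_of_le_of_ne hθ₂mem.1 (Ne.symm hθ₂ne)
    have hθcpos : 0 < θc := lt_trans hθs hθsθc
    have hθ₂pos : 0 < θ₂ := lt_trans hθcpos hθ₂gt
    have hθ₁' : Real.cosh θ₁ - c * θ₁ = 0 := hθ₁
    have hθ₂' : Real.cosh θ₂ - c * θ₂ = 0 := hθ₂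
    refine ⟨θ₁, θ₂, hθ₁pos, hθ₂pos, (lt_trans hθ₁lt hθ₂gt).ne, by linarith, by linarith, ?_⟩
    intro θ hθpos hθeq
    have hGθ : Real.cosh θ - c * θ = 0 := by linarith
    have hGθc' : Real.cosh θc - c * θc < 0 := hGθc
    have hθne : θ ≠ θc := fun h => by rw [h] at hGθ; linarith
    rcases lt_or_gt_of_ne hθne with h | h
    · left
      exact (G_anti c).injOn (Set.mem_Iic.mpr (le_of_lt h))
        (Set.mem_Iic.mpr (le_of_lt hθ₁lt)) (show Real.cosh θ - c * θ = Real.cosh θ₁ - c * θ₁ by linarith)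
    · right
      exact (G_mono c).injOn (Set.mem_Ici.mpr (le_of_lt h))
        (Set.mem_Ici.mpr (le_of_lt hθ₂gt)) (show Real.cosh θ - c * θ = Real.cosh θ₂ - c * θ₂ by linarith)
  · -- unique solution when c = cstar
    intro hceq
    refine ⟨θs, ⟨hθs, ?_⟩, ?_⟩
    · rw [hceq, hcs]; linarith
    · rintro θ ⟨hθpos, hθeq⟩
      by_contra hne
      have := hFpos θ hne
      rw [hceq] at hθeq
      linarith
  · -- no solution when c < cstar
    rintro hlt ⟨θ, hθpos, hθeq⟩
    rcases eq_or_ne θ θs with rfl | hne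
    · nlinarith
    · have := hFpos θ hne
      nlinarith
end

section
/- Let Ω ⊂ ℝ^d be a bounded domain, let v₁ > 0 be an eigenfunction of −Δ with Dirichlet boundary conditions and eigenvalue λ₁, normalized so ∫_Ω v₁ = 1. If u > 0 solves Δu + λ e^u = 0 in Ω with u = 0 on ∂Ω and λ > 0, then λ₁ ∫_Ω u v₁ = λ ∫_Ω e^u v₁ ≥ λ e ∫_Ω u v₁, and consequently λ ≤ λ₁/e. -/
/-!
Pairing `Δu + λ e^u = 0` with `v₁` and moving the Laplacian onto `v₁` by Green's identity gives
`λ₁ ∫ u v₁ = λ ∫ e^u v₁`. Since `e^t ≥ e t`, the right-hand side is at least `λ e ∫ u v₁`, and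
`∫ u v₁ > 0`, so `λ e ≤ λ₁`.

Green's identity reduces, one coordinate at a time and by Fubini, to `∫_U g' = 0` for a `C¹`
function `g` vanishing on the frontier of a bounded open `U ⊆ ℝ`. This is the fundamental theorem
of calculus for the continuous function `1_U g`: it has derivative `1_U g'` everywhere except at
zeros of `g` where `g' ≠ 0`, and such zeros are isolated, hence countable.
-/

open MeasureTheory

/-- The Laplacian of `u : ℝ^d → ℝ`, as the sum of second partial derivatives. -/
noncomputable def laplacian {d : ℕ} (u : (Fin d → ℝ) → ℝ) (x : Fin d → ℝ) : ℝ :=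
  ∑ i : Fin d, fderiv ℝ (fun y => fderiv ℝ u y (Pi.single i 1)) x (Pi.single i 1)

open Set Filter Topology Asymptotics

theorem Continuous.integrableOn_of_isBounded {X E : Type*} [MetricSpace X] [ProperSpace X]
    [MeasurableSpace X] [OpensMeasurableSpace X] {μ : Measure X} [IsFiniteMeasureOnCompacts μ]
    [NormedAddCommGroup E] {f : X → E} (hf : Continuous f) {s : Set X}
    (hs : Bornology.IsBounded s) : IntegrableOn f s μ :=
  (hf.continuousOn.integrableOn_compact hs.isCompact_closure).mono_set subset_closure

section OneDim

variable {E : Type*} [NormedAddCommGroup E] [NormedSpace ℝ E]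

theorem HasDerivAt.indicator_of_eq_zero {s : Set ℝ} {f : ℝ → E} {x : ℝ}
    (hf : HasDerivAt f 0 x) (hfx : f x = 0) : HasDerivAt (s.indicator f) 0 x := by
  have hsx : s.indicator f x = 0 := by simp [hfx]
  rw [hasDerivAt_iff_isLittleO] at hf ⊢
  refine (isBigO_of_le _ fun y => ?_).trans_isLittleO hf
  simpa [hsx, hfx] using norm_indicator_le_norm_self f y

theorem HasDerivAt.indicator_of_notMem_frontier {s : Set ℝ} {f : ℝ → E} {f' : E} {x : ℝ}
    (hf : HasDerivAt f f' x) (hx : x ∉ frontier s) :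
    HasDerivAt (s.indicator f) (s.indicator (fun _ => f') x) x := by
  rw [← mem_compl_iff, compl_frontier_eq_union_interior] at hx
  rcases hx with hint | hext
  · rw [indicator_of_mem (interior_subset hint)]
    exact hf.congr_of_eventuallyEq <|
      eqOn_indicator.eventuallyEq_of_mem (mem_interior_iff_mem_nhds.1 hint)
  · rw [indicator_of_notMem (fun h => interior_subset hext h)]
    exact (hasDerivAt_const x 0).congr_of_eventuallyEq <|
      eqOn_indicator'.eventuallyEq_of_mem (mem_interior_iff_mem_nhds.1 hext)

theorem countable_setOf_eq_zero_and_deriv_ne_zero (f : ℝ → E) :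
    {x | f x = 0 ∧ deriv f x ≠ 0}.Countable := by
  refine (HereditarilyLindelofSpace.isLindelof _).countable_of_isDiscrete
    (isDiscrete_iff_nhdsNE.2 fun x hx => ?_)
  have hne : ∀ᶠ y in 𝓝[≠] x, f y ≠ 0 :=
    (differentiableAt_of_deriv_ne_zero hx.2).hasDerivAt.eventually_ne hx.2
  exact inf_principal_eq_bot.2 (hne.mono fun y hy hy' => hy hy'.1)

variable [CompleteSpace E]

theorem setIntegral_deriv_eq_zero_of_frontier {U : Set ℝ} (hU : IsOpen U)
    (hUb : Bornology.IsBounded U) {g : ℝ → E} (hg : ContDiff ℝ 1 g)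
    (hbd : ∀ x ∈ frontier U, g x = 0) : ∫ t in U, deriv g t = 0 := by
  obtain ⟨R, hR, hUR⟩ := hUb.subset_ball_lt 0 0
  rw [Real.ball_eq_Ioo, zero_sub, zero_add] at hUR
  have hU_notMem : -R ∉ U ∧ R ∉ U := ⟨fun h => (hUR h).1.false, fun h => (hUR h).2.false⟩
  have hFTC : ∫ t in -R..R, U.indicator (deriv g) t = U.indicator g R - U.indicator g (-R) := by
    refine integral_eq_of_hasDerivAt_off_countable _ _ (countable_setOf_eq_zero_and_deriv_ne_zero g)
      (hg.continuous.indicator hbd).continuousOn (fun x hx => ?_) ?_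
    have hgx := (hg.differentiable one_ne_zero x).hasDerivAt
    by_cases hx' : x ∈ frontier U
    · have h0 : deriv g x = 0 := not_not.1 fun h => hx.2 ⟨hbd x hx', h⟩
      rw [indicator_of_notMem (hU.frontier_eq ▸ hx').2]
      exact (hgx.congr_deriv h0).indicator_of_eq_zero (hbd x hx')
    · exact hgx.indicator_of_notMem_frontier hx'
    · exact intervalIntegrable_iff.2
        (((hg.continuous_deriv le_rfl).intervalIntegrable _ _).def'.indicator hU.measurableSet)
  rw [indicator_of_notMem hU_notMem.1, indicator_of_notMem hU_notMem.2, sub_zero,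
    intervalIntegral.integral_of_le (by linarith), setIntegral_indicator hU.measurableSet,
    inter_eq_right.2 (hUR.trans Ioo_subset_Ioc_self)] at hFTC
  exact hFTC

end OneDim

section Slicing

theorem Fin.insertNth_eq_insertNth_zero_add_smul_single {n : ℕ} (i : Fin (n + 1))
    (z : Fin n → ℝ) :
    (fun t : ℝ => (i.insertNth t z : Fin (n + 1) → ℝ)) =
      fun t => i.insertNth 0 z + t • Pi.single i 1 := by
  ext t : 1
  conv_lhs => rw [← zero_add t, ← add_zero z]
  rw [Fin.insertNth_add, Fin.insertNth_zero_right, ← Pi.single_smul, smul_eq_mul, mul_one]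

theorem hasDerivAt_insertNth {n : ℕ} (i : Fin (n + 1)) (z : Fin n → ℝ) (t : ℝ) :
    HasDerivAt (fun s : ℝ => (i.insertNth s z : Fin (n + 1) → ℝ)) (Pi.single i 1) t := by
  rw [Fin.insertNth_eq_insertNth_zero_add_smul_single]
  simpa using ((hasDerivAt_id t).smul_const (Pi.single i (1 : ℝ))).const_add
    (i.insertNth 0 z : Fin (n + 1) → ℝ)

theorem contDiff_insertNth {n : ℕ} (i : Fin (n + 1)) (z : Fin n → ℝ) {k : WithTop ℕ∞} :
    ContDiff ℝ k (fun s : ℝ => (i.insertNth s z : Fin (n + 1) → ℝ)) := by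
  rw [Fin.insertNth_eq_insertNth_zero_add_smul_single]
  exact contDiff_const.add (contDiff_id.smul contDiff_const)

variable {E : Type*} [NormedAddCommGroup E] [NormedSpace ℝ E] [CompleteSpace E]

theorem setIntegral_fderiv_comp_insertNth_eq_zero {n : ℕ} {Ω : Set (Fin (n + 1) → ℝ)}
    (hΩ : IsOpen Ω) (hΩb : Bornology.IsBounded Ω) {G : (Fin (n + 1) → ℝ) → E}
    (hG : ContDiff ℝ 1 G) (hbd : ∀ x ∈ frontier Ω, G x = 0) (i : Fin (n + 1))
    (z : Fin n → ℝ) :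
    ∫ t in (fun s : ℝ => (i.insertNth s z : Fin (n + 1) → ℝ)) ⁻¹' Ω,
      fderiv ℝ G (i.insertNth t z) (Pi.single i 1) = 0 := by
  have hline := (contDiff_insertNth (k := 1) i z).continuous
  have hderiv (t : ℝ) :
      deriv (fun s => G (i.insertNth s z)) t = fderiv ℝ G (i.insertNth t z) (Pi.single i 1) :=
    ((hG.differentiable one_ne_zero _).hasFDerivAt.comp_hasDerivAt t
      (hasDerivAt_insertNth i z t)).deriv
  simp_rw [← hderiv]
  refine setIntegral_deriv_eq_zero_of_frontier (hΩ.preimage hline) ?_ ?_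
    fun t ht => hbd _ (hline.frontier_preimage_subset Ω ht)
  · have hproj := (ContinuousLinearMap.proj (R := ℝ) (φ := fun _ : Fin (n + 1) => ℝ) i).lipschitz
    exact (hproj.isBounded_image hΩb).subset fun t ht => ⟨_, ht, by simp⟩
  · exact hG.comp (contDiff_insertNth i z)

theorem setIntegral_fderiv_single_eq_zero {d : ℕ} {Ω : Set (Fin d → ℝ)}
    (hΩ : IsOpen Ω) (hΩb : Bornology.IsBounded Ω) {G : (Fin d → ℝ) → E}
    (hG : ContDiff ℝ 1 G) (hbd : ∀ x ∈ frontier Ω, G x = 0) (i : Fin d) :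
    ∫ x in Ω, fderiv ℝ G x (Pi.single i 1) = 0 := by
  obtain ⟨n, rfl⟩ : ∃ n, d = n + 1 := Nat.exists_eq_succ_of_ne_zero i.pos.ne'
  set F := Ω.indicator fun x => fderiv ℝ G x (Pi.single i 1)
  have hF : Integrable F := (integrable_indicator_iff hΩ.measurableSet).2
    (((hG.continuous_fderiv one_ne_zero).clm_apply continuous_const).integrableOn_of_isBounded hΩb)
  have e := (volume_preserving_piFinSuccAbove (fun _ : Fin (n + 1) => ℝ) i).symm
  calc ∫ x in Ω, fderiv ℝ G x (Pi.single i 1)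
      = ∫ p : ℝ × (Fin n → ℝ), F (i.insertNth p.1 p.2) := by
        rw [← integral_indicator hΩ.measurableSet,
          ← e.integral_comp (MeasurableEquiv.measurableEmbedding _)]
        rfl
    _ = ∫ z : Fin n → ℝ, ∫ t : ℝ, F (i.insertNth t z) := by
        rw [Measure.volume_eq_prod]
        exact integral_prod_symm _
          ((e.integrable_comp_emb (MeasurableEquiv.measurableEmbedding _)).2 hF)
    _ = 0 := by
        refine integral_eq_zero_of_ae (ae_of_all _ fun z => ?_)
        simp_rw [F, ← indicator_comp_right (fun t : ℝ => (i.insertNth t z : Fin (n + 1) → ℝ))]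
        rw [integral_indicator
          (hΩ.preimage (contDiff_insertNth (k := 0) i z).continuous).measurableSet]
        exact setIntegral_fderiv_comp_insertNth_eq_zero hΩ hΩb hG hbd i z

end Slicing

section Green

variable {d : ℕ} {Ω : Set (Fin d → ℝ)}

theorem fderiv_mul_fderiv_sub_mul_fderiv_apply {E : Type*} [NormedAddCommGroup E] [NormedSpace ℝ E]
    {u v : E → ℝ} {x : E} (e : E) (hu : DifferentiableAt ℝ u x) (hv : DifferentiableAt ℝ v x)
    (hu' : DifferentiableAt ℝ (fun y => fderiv ℝ u y e) x)
    (hv' : DifferentiableAt ℝ (fun y => fderiv ℝ v y e) x) :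
    fderiv ℝ (fun y => v y * fderiv ℝ u y e - u y * fderiv ℝ v y e) x e =
      v x * fderiv ℝ (fun y => fderiv ℝ u y e) x e -
        u x * fderiv ℝ (fun y => fderiv ℝ v y e) x e := by
  rw [fderiv_fun_sub (hv.fun_mul hu') (hu.fun_mul hv'), fderiv_fun_mul hv hu',
    fderiv_fun_mul hu hv']
  simp only [sub_apply, add_apply, smul_apply, smul_eq_mul]
  ring

theorem setIntegral_mul_laplacian_comm (hΩ : IsOpen Ω) (hΩb : Bornology.IsBounded Ω)
    {u v : (Fin d → ℝ) → ℝ} (hu : ContDiff ℝ 2 u) (hv : ContDiff ℝ 2 v)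
    (hu0 : ∀ x ∈ frontier Ω, u x = 0) (hv0 : ∀ x ∈ frontier Ω, v x = 0) :
    ∫ x in Ω, v x * laplacian u x = ∫ x in Ω, u x * laplacian v x := by
  have hpartial {f : (Fin d → ℝ) → ℝ} (hf : ContDiff ℝ 2 f) (i : Fin d) :
      ContDiff ℝ 1 (fun y => fderiv ℝ f y (Pi.single i 1)) :=
    (hf.fderiv_right (by norm_num)).clm_apply contDiff_const
  have hlap {f : (Fin d → ℝ) → ℝ} (hf : ContDiff ℝ 2 f) : Continuous (laplacian f) :=
    continuous_finsetSum _ fun i _ =>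
      ((hpartial hf i).continuous_fderiv one_ne_zero).clm_apply continuous_const
  set F : Fin d → (Fin d → ℝ) → ℝ :=
    fun i y => v y * fderiv ℝ u y (Pi.single i 1) - u y * fderiv ℝ v y (Pi.single i 1)
  have hF (i : Fin d) : ContDiff ℝ 1 (F i) :=
    ((hv.of_le (by norm_num)).mul (hpartial hu i)).sub
      ((hu.of_le (by norm_num)).mul (hpartial hv i))
  have hdiv (x : Fin d → ℝ) :
      ∑ i, fderiv ℝ (F i) x (Pi.single i 1) = v x * laplacian u x - u x * laplacian v x := by
    simp only [laplacian, Finset.mul_sum, ← Finset.sum_sub_distrib]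
    refine Finset.sum_congr rfl fun i _ => fderiv_mul_fderiv_sub_mul_fderiv_apply _
      (hu.differentiable (by norm_num) x) (hv.differentiable (by norm_num) x)
      ((hpartial hu i).differentiable one_ne_zero x) ((hpartial hv i).differentiable one_ne_zero x)
  rw [← sub_eq_zero,
    ← integral_sub ((hv.continuous.fun_mul (hlap hu)).integrableOn_of_isBounded hΩb)
      ((hu.continuous.fun_mul (hlap hv)).integrableOn_of_isBounded hΩb)]
  simp_rw [← hdiv]
  rw [integral_finsetSum _ fun i _ => (((hF i).continuous_fderiv one_ne_zero).clm_apply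
    continuous_const).integrableOn_of_isBounded hΩb]
  exact Finset.sum_eq_zero fun i _ =>
    setIntegral_fderiv_single_eq_zero hΩ hΩb (hF i) (fun x hx => by simp [F, hu0 x hx, hv0 x hx]) i

theorem eigenvalue_mul_setIntegral_mul_eq (hΩ : IsOpen Ω) (hΩb : Bornology.IsBounded Ω)
    {u v f : (Fin d → ℝ) → ℝ} {μ : ℝ} (hu : ContDiff ℝ 2 u) (hv : ContDiff ℝ 2 v)
    (hu0 : ∀ x ∈ frontier Ω, u x = 0) (hv0 : ∀ x ∈ frontier Ω, v x = 0)
    (hv_eig : ∀ x ∈ Ω, -laplacian v x = μ * v x) (hu_eq : ∀ x ∈ Ω, -laplacian u x = f x) :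
    μ * ∫ x in Ω, u x * v x = ∫ x in Ω, f x * v x := by
  have hgreen := setIntegral_mul_laplacian_comm hΩ hΩb hu hv hu0 hv0
  rw [← integral_const_mul]
  calc ∫ x in Ω, μ * (u x * v x) = ∫ x in Ω, u x * -laplacian v x :=
        setIntegral_congr_fun hΩ.measurableSet fun x hx => by rw [hv_eig x hx]; ring
    _ = ∫ x in Ω, v x * -laplacian u x := by simp only [mul_neg, integral_neg, hgreen]
    _ = ∫ x in Ω, f x * v x :=
        setIntegral_congr_fun hΩ.measurableSet fun x hx => by rw [hu_eq x hx]; ring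

end Green

theorem IsOpen.setIntegral_pos_of_pos {X : Type*} [TopologicalSpace X] [MeasurableSpace X]
    [OpensMeasurableSpace X] {μ : Measure X} [μ.IsOpenPosMeasure] {s : Set X} (hs : IsOpen s)
    (hne : s.Nonempty) {f : X → ℝ} (hf : IntegrableOn f s μ) (hpos : ∀ x ∈ s, 0 < f x) :
    0 < ∫ x in s, f x ∂μ := by
  have hnn : 0 ≤ᵐ[μ.restrict s] f :=
    (ae_restrict_iff' hs.measurableSet).2 (ae_of_all _ fun x hx => (hpos x hx).le)
  rw [setIntegral_pos_iff_support_of_nonneg_ae hnn hf]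
  exact (hs.measure_pos μ hne).trans_le (measure_mono fun x hx => ⟨(hpos x hx).ne', hx⟩)

theorem exp_one_mul_setIntegral_mul_le_setIntegral_exp_mul {X : Type*} [MeasurableSpace X]
    {μ : Measure X} {s : Set X} (hs : MeasurableSet s) {u v : X → ℝ}
    (huv : IntegrableOn (fun x => u x * v x) s μ)
    (hev : IntegrableOn (fun x => Real.exp (u x) * v x) s μ) (hv : ∀ x ∈ s, 0 ≤ v x) :
    Real.exp 1 * ∫ x in s, u x * v x ∂μ ≤ ∫ x in s, Real.exp (u x) * v x ∂μ := by
  rw [← integral_const_mul]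
  refine setIntegral_mono_on (huv.const_mul _) hev hs fun x hx => ?_
  rw [← mul_assoc]
  exact mul_le_mul_of_nonneg_right Real.exp_one_mul_le_exp (hv x hx)

theorem bratu_upper_bound_general (d : ℕ) (Ω : Set (Fin d → ℝ))
    (hΩopen : IsOpen Ω) (hΩbdd : Bornology.IsBounded Ω) (hΩne : Ω.Nonempty)
    (lam lam₁ : ℝ) (hlam : 0 < lam)
    (v₁ u : (Fin d → ℝ) → ℝ)
    (hv₁smooth : ContDiff ℝ 2 v₁) (husmooth : ContDiff ℝ 2 u)
    (hv₁pos : ∀ x ∈ Ω, 0 < v₁ x)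
    (hv₁eig : ∀ x ∈ Ω, -laplacian v₁ x = lam₁ * v₁ x)
    (hv₁bd : ∀ x ∈ frontier Ω, v₁ x = 0)
    (husol : ∀ x ∈ Ω, laplacian u x + lam * Real.exp (u x) = 0)
    (hupos : ∀ x ∈ Ω, 0 < u x)
    (hubd : ∀ x ∈ frontier Ω, u x = 0) :
    lam₁ * ∫ x in Ω, u x * v₁ x = lam * ∫ x in Ω, Real.exp (u x) * v₁ x ∧
    lam * ∫ x in Ω, Real.exp (u x) * v₁ x ≥ lam * Real.exp 1 * ∫ x in Ω, u x * v₁ x ∧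
    lam ≤ lam₁ / Real.exp 1 := by
  have hEq : lam₁ * ∫ x in Ω, u x * v₁ x = lam * ∫ x in Ω, Real.exp (u x) * v₁ x := by
    rw [eigenvalue_mul_setIntegral_mul_eq hΩopen hΩbdd husmooth hv₁smooth hubd hv₁bd hv₁eig
      (f := fun x => lam * Real.exp (u x)) fun x hx => by linarith [husol x hx]]
    simp_rw [mul_assoc, integral_const_mul]
  have hIuv : IntegrableOn (fun x => u x * v₁ x) Ω :=
    (husmooth.continuous.mul hv₁smooth.continuous).integrableOn_of_isBounded hΩbdd
  have hIev : IntegrableOn (fun x => Real.exp (u x) * v₁ x) Ω :=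
    ((Real.continuous_exp.comp husmooth.continuous).mul
      hv₁smooth.continuous).integrableOn_of_isBounded hΩbdd
  have hexp := exp_one_mul_setIntegral_mul_le_setIntegral_exp_mul hΩopen.measurableSet hIuv hIev
    fun x hx => (hv₁pos x hx).le
  have hpos : 0 < ∫ x in Ω, u x * v₁ x :=
    hΩopen.setIntegral_pos_of_pos hΩne hIuv fun x hx => mul_pos (hupos x hx) (hv₁pos x hx)
  have hmono :
      lam * Real.exp 1 * ∫ x in Ω, u x * v₁ x ≤ lam * ∫ x in Ω, Real.exp (u x) * v₁ x := by
    rw [mul_assoc]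
    exact mul_le_mul_of_nonneg_left hexp hlam.le
  refine ⟨hEq, hmono, ?_⟩
  rw [le_div_iff₀ (Real.exp_pos 1)]
  exact le_of_mul_le_mul_right (hmono.trans hEq.ge) hpos

theorem bratu_upper_bound (d : ℕ) (Ω : Set (Fin d → ℝ))
    (hΩopen : IsOpen Ω) (hΩbdd : Bornology.IsBounded Ω) (hΩne : Ω.Nonempty)
    (lam lam₁ : ℝ) (hlam : 0 < lam)
    (v₁ u : (Fin d → ℝ) → ℝ)
    (hv₁smooth : ContDiff ℝ 2 v₁) (husmooth : ContDiff ℝ 2 u)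
    (hv₁pos : ∀ x ∈ Ω, 0 < v₁ x)
    (hv₁eig : ∀ x ∈ Ω, -laplacian v₁ x = lam₁ * v₁ x)
    (hv₁bd : ∀ x ∈ frontier Ω, v₁ x = 0)
    (hnorm : ∫ x in Ω, v₁ x = 1)
    (husol : ∀ x ∈ Ω, laplacian u x + lam * Real.exp (u x) = 0)
    (hupos : ∀ x ∈ Ω, 0 < u x)
    (hubd : ∀ x ∈ frontier Ω, u x = 0) :
    lam₁ * ∫ x in Ω, u x * v₁ x = lam * ∫ x in Ω, Real.exp (u x) * v₁ x ∧
    lam * ∫ x in Ω, Real.exp (u x) * v₁ x ≥ lam * Real.exp 1 * ∫ x in Ω, u x * v₁ x ∧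
    lam ≤ lam₁ / Real.exp 1 :=
  bratu_upper_bound_general d Ω hΩopen hΩbdd hΩne lam lam₁ hlam v₁ u hv₁smooth husmooth hv₁pos
    hv₁eig hv₁bd husol hupos hubd
end
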